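/- arXiv:1510.03878 — 6 statements merged into one kernel-verified Lean document; each statement's English description precedes it below -/
import Mathlib

section
/- For every rotation matrix X ∈ SO(3), the identity ‖ψ(X)‖² = 4 |X|_I² (1 − |X|_I²) holds, where |X|_I² = tr(I − X)/4. -/
/-!
For any `3 × 3` real matrix, `‖ψ(A)‖² = (tr (AᵀA) - tr (A²)) / 4`. For a rotation `X` with
`t = tr X` we have `tr (XᵀX) = 3` and `adj X = Xᵀ`, so Newton's identity
`tr (X²) = t² - 2 tr (adj X)` gives `tr (X²) = t² - 2t`. Hence `‖ψ(X)‖² = (3 - t)(1 + t) / 4`,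
which is `4 |X|²(1 - |X|²)` because `|X|² = (3 - t) / 4`.
-/

open Matrix

noncomputable section

/-- Skew-symmetric matrix `[x]ₓ` such that `[x]ₓ y = x × y`. -/
def skew (x : Fin 3 → ℝ) : Matrix (Fin 3) (Fin 3) ℝ :=
  !![0, -x 2, x 1; x 2, 0, -x 0; -x 1, x 0, 0]

/-- The special orthogonal group SO(3): `RᵀR = I` and `det R = 1`. -/
def SO3 (R : Matrix (Fin 3) (Fin 3) ℝ) : Prop :=
  Rᵀ * R = 1 ∧ R.det = 1

/-- Euclidean inner product on ℝ³. -/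
def dotp (x y : Fin 3 → ℝ) : ℝ := ∑ i, x i * y i

/-- Squared Euclidean norm on ℝ³. -/
def norm2 (x : Fin 3 → ℝ) : ℝ := dotp x x

/-- Vector cross product on ℝ³. -/
def cross (x y : Fin 3 → ℝ) : Fin 3 → ℝ :=
  ![x 1 * y 2 - x 2 * y 1, x 2 * y 0 - x 0 * y 2, x 0 * y 1 - x 1 * y 0]

/-- `ψ(A) = vex(P_a(A))`: the vex of the skew-symmetric part of `A`. -/
def psi (A : Matrix (Fin 3) (Fin 3) ℝ) : Fin 3 → ℝ :=
  ![(A 2 1 - A 1 2) / 2, (A 0 2 - A 2 0) / 2, (A 1 0 - A 0 1) / 2]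

/-- Normalized attitude distance squared `|X|_I² = tr(I − X)/4`. -/
def attDist2 (X : Matrix (Fin 3) (Fin 3) ℝ) : ℝ := (1 - X).trace / 4

/-- Rodrigues rotation matrix `𝓡(θ,u) = I + sin θ [u]ₓ + (1 − cos θ)[u]ₓ²`. -/
def rodrigues (θ : ℝ) (u : Fin 3 → ℝ) : Matrix (Fin 3) (Fin 3) ℝ :=
  1 + Real.sin θ • skew u + (1 - Real.cos θ) • (skew u * skew u)

namespace Matrix

theorem adjugate_eq_transpose_of_transpose_mul_self_eq_one {n R : Type*} [Fintype n]
    [DecidableEq n] [CommRing R] {A : Matrix n n R} (hA : Aᵀ * A = 1) (hdet : A.det = 1) :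
    A.adjugate = Aᵀ := by
  calc A.adjugate = (Aᵀ * A) * A.adjugate := by rw [hA, Matrix.one_mul]
    _ = Aᵀ := by rw [Matrix.mul_assoc, mul_adjugate, hdet, one_smul, Matrix.mul_one]

theorem trace_mul_self_fin_three {R : Type*} [CommRing R] (A : Matrix (Fin 3) (Fin 3) R) :
    trace (A * A) = trace A ^ 2 - 2 * trace A.adjugate := by
  simp only [trace_fin_three, mul_apply, Fin.sum_univ_three, adjugate_fin_three, of_apply,
    cons_val', cons_val_zero, cons_val_fin_one, cons_val_one, cons_val]
  ring

end Matrix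

theorem norm2_psi (A : Matrix (Fin 3) (Fin 3) ℝ) :
    norm2 (psi A) = (trace (Aᵀ * A) - trace (A * A)) / 4 := by
  simp only [norm2, dotp, psi, trace_fin_three, mul_apply, transpose_apply, Fin.sum_univ_three,
    cons_val_zero, cons_val_one, cons_val_two, tail_cons, head_cons]
  ring

theorem attDist2_eq (X : Matrix (Fin 3) (Fin 3) ℝ) : attDist2 X = (3 - trace X) / 4 := by
  rw [attDist2, trace_sub, trace_one, Fintype.card_fin, Nat.cast_ofNat]

/-- For every `X ∈ SO(3)`, `‖ψ(X)‖² = 4 |X|_I² (1 − |X|_I²)`. -/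
theorem stmt3 (X : Matrix (Fin 3) (Fin 3) ℝ) (hX : SO3 X) :
    norm2 (psi X) = 4 * attDist2 X * (1 - attDist2 X) := by
  obtain ⟨hOrth, hdet⟩ := hX
  have htrace_sq : trace (X * X) = trace X ^ 2 - 2 * trace X := by
    rw [trace_mul_self_fin_three, adjugate_eq_transpose_of_transpose_mul_self_eq_one hOrth hdet,
      trace_transpose]
  rw [norm2_psi, hOrth, trace_one, Fintype.card_fin, htrace_sq, attDist2_eq]
  ring
end
end

section
/- Let η ∈ ℝ, ε ∈ ℝ³, k ∈ ℝ, and let u ∈ ℝ³ be a unit vector. Define ε_q := k η ‖ε‖² u + √(1 − k²‖ε‖⁴) ε + k ‖ε‖² (ε × u), assuming k²‖ε‖⁴ ≤ 1. Then ‖ε_q‖² = ‖ε‖² + k² η² ‖ε‖⁴ − k² ‖ε‖⁴ (ε·u)² + 2 k η ‖ε‖² √(1 − k²‖ε‖⁴) (ε·u). -/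
open Matrix

noncomputable section

theorem dotp_eq_dotProduct (x y : Fin 3 → ℝ) : dotp x y = x ⬝ᵥ y := rfl

theorem cross_eq_crossProduct (x y : Fin 3 → ℝ) : cross x y = x ⨯₃ y :=
  (cross_apply x y).symm

/-- The cross term is orthogonal to `v` and `w`, and Lagrange's identity evaluates its square. -/
theorem dotProduct_self_smul_add_smul_add_smul_cross {R : Type*} [CommRing R] (a b c : R)
    (v w : Fin 3 → R) :
    (a • w + b • v + c • v ⨯₃ w) ⬝ᵥ (a • w + b • v + c • v ⨯₃ w) =
      a ^ 2 * (w ⬝ᵥ w) + b ^ 2 * (v ⬝ᵥ v) + 2 * a * b * (v ⬝ᵥ w) +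
        c ^ 2 * ((v ⬝ᵥ v) * (w ⬝ᵥ w) - (v ⬝ᵥ w) ^ 2) := by
  simp only [add_dotProduct, dotProduct_add, smul_dotProduct, dotProduct_smul, smul_eq_mul,
    dot_self_cross, dot_cross_self, cross_dot_cross, dotProduct_comm (v ⨯₃ w) v,
    dotProduct_comm (v ⨯₃ w) w, dotProduct_comm w v]
  ring

/-- With `ε_q = kη‖ε‖² u + √(1 − k²‖ε‖⁴) ε + k‖ε‖² (ε × u)` and
`k²‖ε‖⁴ ≤ 1`, one has
`‖ε_q‖² = ‖ε‖² + k²η²‖ε‖⁴ − k²‖ε‖⁴(ε·u)² + 2kη‖ε‖²√(1 − k²‖ε‖⁴)(ε·u)`. -/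
theorem stmt8 (η k : ℝ) (ε u : Fin 3 → ℝ) (hu : norm2 u = 1)
    (hk : k ^ 2 * norm2 ε ^ 2 ≤ 1) :
    norm2 ((k * η * norm2 ε) • u +
        Real.sqrt (1 - k ^ 2 * norm2 ε ^ 2) • ε + (k * norm2 ε) • cross ε u) =
      norm2 ε + k ^ 2 * η ^ 2 * norm2 ε ^ 2 - k ^ 2 * norm2 ε ^ 2 * dotp ε u ^ 2 +
        2 * k * η * norm2 ε * Real.sqrt (1 - k ^ 2 * norm2 ε ^ 2) * dotp ε u := by
  have hs : Real.sqrt (1 - k ^ 2 * norm2 ε ^ 2) ^ 2 = 1 - k ^ 2 * norm2 ε ^ 2 :=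
    Real.sq_sqrt (by linarith)
  simp only [norm2, dotp_eq_dotProduct, cross_eq_crossProduct] at hu hs ⊢
  rw [dotProduct_self_smul_add_smul_add_smul_cross, hu, hs]
  ring
end
end

section
/- Let (η, ε) ∈ ℝ × ℝ³ with η² + ‖ε‖² = 1, let 0 ≤ k, k²‖ε‖⁴ ≤ 1, and let u ∈ ℝ³ be a unit vector. Define ε_q := k η ‖ε‖² u + √(1 − k²‖ε‖⁴) ε + k ‖ε‖² (ε × u). Then ‖ε_q‖² ≤ ‖ε‖² (1 + k + k²/4). -/
open Matrix

noncomputable section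

/-!
Since `ε × u` is orthogonal to `u` and `ε`, expanding gives, with `e = ‖ε‖²`, `d = ε ⬝ u` and
`b = √(1 - k²e²)`,
`‖ε_q‖² = e + k²e²(1 - e) - k²e²d² + 2keηbd`.
Now `e(1 - e) ≤ 1/4`, and `2(bη)d ≤ b²η² + d² ≤ η² + e = 1` by Cauchy–Schwarz `d² ≤ e`.
-/

lemma norm2_nonneg (x : Fin 3 → ℝ) : 0 ≤ norm2 x := by
  simp only [norm2, dotp]
  exact Finset.sum_nonneg fun i _ => mul_self_nonneg (x i)

lemma norm2_cross (x y : Fin 3 → ℝ) :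
    norm2 (cross x y) = norm2 x * norm2 y - dotp x y ^ 2 := by
  simp only [norm2, dotp, cross, Fin.sum_univ_three, cons_val_zero, cons_val_one, cons_val]
  ring

lemma dotp_sq_le_norm2_mul_norm2 (x y : Fin 3 → ℝ) : dotp x y ^ 2 ≤ norm2 x * norm2 y := by
  linarith [norm2_cross x y, norm2_nonneg (cross x y)]

lemma norm2_smul_add_smul_add_smul_cross (a b c : ℝ) (x y : Fin 3 → ℝ) :
    norm2 (a • y + b • x + c • cross x y) =
      a ^ 2 * norm2 y + b ^ 2 * norm2 x + c ^ 2 * (norm2 x * norm2 y - dotp x y ^ 2) +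
        2 * a * b * dotp x y := by
  simp only [norm2, dotp, cross, Fin.sum_univ_three, Pi.add_apply, Pi.smul_apply, smul_eq_mul,
    cons_val_zero, cons_val_one, cons_val]
  ring

lemma warped_norm2_le {η k e d b : ℝ} (hq : η ^ 2 + e = 1) (he : 0 ≤ e) (hk : 0 ≤ k)
    (hd : d ^ 2 ≤ e) (hb : b ^ 2 = 1 - k ^ 2 * e ^ 2) :
    (k * η * e) ^ 2 + b ^ 2 * e + (k * e) ^ 2 * (e - d ^ 2) + 2 * (k * η * e) * b * d ≤
      e * (1 + k + k ^ 2 / 4) := by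
  have hcross : 2 * b * η * d ≤ 1 := by
    have hbη : b ^ 2 * η ^ 2 ≤ η ^ 2 := by nlinarith [sq_nonneg (k * e), sq_nonneg η]
    nlinarith [sq_nonneg (b * η - d)]
  have hquarter : e * (1 - e) ≤ 1 / 4 := by nlinarith [sq_nonneg (2 * e - 1)]
  calc (k * η * e) ^ 2 + b ^ 2 * e + (k * e) ^ 2 * (e - d ^ 2) + 2 * (k * η * e) * b * d
      = e + k ^ 2 * e * (e * (1 - e)) - (k * e * d) ^ 2 + k * e * (2 * b * η * d) := by
        rw [hb]; linear_combination (k * e) ^ 2 * hq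
    _ ≤ e + k ^ 2 * e * (1 / 4) - 0 + k * e * 1 := by
        gcongr
        exact sq_nonneg _
    _ = e * (1 + k + k ^ 2 / 4) := by ring

/-- For a unit quaternion `(η, ε)`, `0 ≤ k` with `k²‖ε‖⁴ ≤ 1`
and a unit vector `u`, the warped vector part `ε_q` satisfies
`‖ε_q‖² ≤ ‖ε‖² (1 + k + k²/4)`. -/
theorem stmt9 (η k : ℝ) (ε u : Fin 3 → ℝ) (hq : η ^ 2 + norm2 ε = 1)
    (hk0 : 0 ≤ k) (hk : k ^ 2 * norm2 ε ^ 2 ≤ 1) (hu : norm2 u = 1) :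
    norm2 ((k * η * norm2 ε) • u +
        Real.sqrt (1 - k ^ 2 * norm2 ε ^ 2) • ε + (k * norm2 ε) • cross ε u) ≤
      norm2 ε * (1 + k + k ^ 2 / 4) := by
  have hd : dotp ε u ^ 2 ≤ norm2 ε := by
    simpa [hu] using dotp_sq_le_norm2_mul_norm2 ε u
  rw [norm2_smul_add_smul_add_smul_cross, hu, mul_one, mul_one]
  exact warped_norm2_le hq (norm2_nonneg ε) hk0 hd (Real.sq_sqrt (by linarith))
end
end

section
/- Let 0 < k < 1/√2 and let u ∈ ℝ³ be a unit vector. For R ∈ SO(3), define Γ(R) := R 𝓡(2 arcsin(k |R|_I²), u), where 𝓡(θ,u) = I + sin θ [u]ₓ + (1 − cos θ)[u]ₓ². Then V(Γ(R)) := 1 − √(1 − |Γ(R)|_I²) = 0 if and only if R = I. -/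
open Matrix

noncomputable section

/-!
`Γ(R)` is orthogonal, and for an orthogonal `X` one has `‖X - 1‖_F² = 2 tr(1 - X) = 8 |X|_I²`,
so `V(Γ(R)) = 0` iff `Γ(R) = 1`, i.e. `R = 𝓡ᵀ` with `𝓡 = 𝓡(2 arcsin(k s), u)`, `s = |R|_I²`.
Since `|𝓡(2 arcsin x, u)|_I² = (1 - cos(2 arcsin x))/2 = x²`, this gives `s = (k s)²`; as
`s ∈ [0, 1]` and `k² < 1/2`, we get `s = 0`, i.e. `R = 1`.
-/

open Real

section Orthogonal

variable {n : Type*} [Fintype n] [DecidableEq n] {X : Matrix n n ℝ}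

lemma trace_transpose_mul_sub_one (hX : Xᵀ * X = 1) :
    ((X - 1)ᵀ * (X - 1)).trace = 2 * (Fintype.card n - X.trace) := by
  simp only [transpose_sub, transpose_one, sub_mul, mul_sub, hX, one_mul, mul_one,
    trace_sub, trace_one, trace_transpose]
  ring

lemma trace_le_card_of_transpose_mul_self_eq_one (hX : Xᵀ * X = 1) :
    X.trace ≤ Fintype.card n := by
  have hsq := (posSemidef_conjTranspose_mul_self (X - 1)).trace_nonneg
  rw [conjTranspose_eq_transpose_of_trivial, trace_transpose_mul_sub_one hX] at hsq
  linarith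

lemma trace_eq_card_iff_of_transpose_mul_self_eq_one (hX : Xᵀ * X = 1) :
    X.trace = Fintype.card n ↔ X = 1 := by
  rw [← sub_eq_zero (b := (1 : Matrix n n ℝ)), ← trace_conjTranspose_mul_self_eq_zero_iff,
    conjTranspose_eq_transpose_of_trivial, trace_transpose_mul_sub_one hX]
  constructor <;> intro h <;> linarith

end Orthogonal

section Skew

variable (x : Fin 3 → ℝ)

lemma skew_transpose : (skew x)ᵀ = -skew x := by
  ext i j; fin_cases i <;> fin_cases j <;> simp [skew]

lemma trace_skew : (skew x).trace = 0 := by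
  simp [skew, trace_fin_three]

lemma trace_skew_mul_skew : (skew x * skew x).trace = -2 * norm2 x := by
  simp only [trace_fin_three, mul_apply, Fin.sum_univ_three, norm2, dotp, skew, of_apply,
    cons_val', cons_val_zero, cons_val_one, cons_val, cons_val_fin_one]
  ring

lemma skew_mul_skew_mul_skew : skew x * skew x * skew x = -norm2 x • skew x := by
  ext i j
  fin_cases i <;> fin_cases j <;> simp [skew, mul_apply, Fin.sum_univ_three, norm2, dotp] <;> ring

end Skew

lemma attDist2_eq_three_sub_trace (X : Matrix (Fin 3) (Fin 3) ℝ) :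
    attDist2 X = (3 - X.trace) / 4 := by
  simp [attDist2, trace_sub]

lemma attDist2_transpose (X : Matrix (Fin 3) (Fin 3) ℝ) : attDist2 Xᵀ = attDist2 X := by
  simp [attDist2_eq_three_sub_trace]

lemma attDist2_nonneg {X : Matrix (Fin 3) (Fin 3) ℝ} (hX : Xᵀ * X = 1) : 0 ≤ attDist2 X := by
  have := trace_le_card_of_transpose_mul_self_eq_one hX
  simp only [Fintype.card_fin, Nat.cast_ofNat] at this
  rw [attDist2_eq_three_sub_trace]; linarith

lemma attDist2_eq_zero_iff {X : Matrix (Fin 3) (Fin 3) ℝ} (hX : Xᵀ * X = 1) :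
    attDist2 X = 0 ↔ X = 1 := by
  rw [← trace_eq_card_iff_of_transpose_mul_self_eq_one hX, attDist2_eq_three_sub_trace]
  simp only [Fintype.card_fin, Nat.cast_ofNat]
  constructor <;> intro h <;> linarith

lemma neg_one_le_trace_of_SO3 {X : Matrix (Fin 3) (Fin 3) ℝ} (hX : SO3 X) : -1 ≤ X.trace := by
  obtain ⟨horth, hdet⟩ := hX
  -- `adj X = Xᵀ` ties every diagonal entry of `X` to a `2 × 2` minor
  have hadj : X.adjugate = Xᵀ := by
    rw [← mul_one X.adjugate, ← mul_eq_one_comm.mp horth, ← mul_assoc, adjugate_mul, hdet,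
      one_smul, one_mul]
  have e0 := congrFun (congrFun hadj 0) 0
  have e1 := congrFun (congrFun hadj 1) 1
  have e2 := congrFun (congrFun hadj 2) 2
  simp only [Fin.isValue, adjugate_fin_three, of_apply, cons_val', cons_val_zero,
    cons_val_fin_one, transpose_apply, cons_val_one, cons_val] at e0 e1 e2
  have h0 := congrFun (congrFun horth 0) 0
  have h1 := congrFun (congrFun horth 1) 1
  have h2 := congrFun (congrFun horth 2) 2
  simp only [Fin.isValue, mul_apply, transpose_apply, Fin.sum_univ_three, one_apply_eq] at h0 h1 h2
  rw [trace_fin_three]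
  nlinarith [sq_nonneg (X 0 1 - X 1 0), sq_nonneg (X 0 2 - X 2 0), sq_nonneg (X 1 2 - X 2 1)]

lemma attDist2_le_one {X : Matrix (Fin 3) (Fin 3) ℝ} (hX : SO3 X) : attDist2 X ≤ 1 := by
  have := neg_one_le_trace_of_SO3 hX
  rw [attDist2_eq_three_sub_trace]; linarith

lemma rodrigues_zero (u : Fin 3 → ℝ) : rodrigues 0 u = 1 := by
  simp [rodrigues]

section Rodrigues

variable {u : Fin 3 → ℝ}

lemma rodrigues_transpose_mul_self (hu : norm2 u = 1) (θ : ℝ) :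
    (rodrigues θ u)ᵀ * rodrigues θ u = 1 := by
  -- `S³ = -S` for `S = [u]ₓ` collapses `𝓡ᵀ𝓡` to `1 + (2(1 - cos θ) - sin² θ - (1 - cos θ)²) • S²`
  have h3 : skew u * skew u * skew u = -skew u := by
    rw [skew_mul_skew_mul_skew, hu, neg_one_smul]
  have hsc : 2 * (1 - cos θ) - sin θ ^ 2 - (1 - cos θ) ^ 2 = 0 := by
    linear_combination -sin_sq_add_cos_sq θ
  simp only [rodrigues, transpose_add, transpose_one, transpose_smul, transpose_mul,
    skew_transpose, neg_mul, mul_neg, neg_neg, smul_neg, ← sub_eq_add_neg]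
  simp only [add_mul, mul_add, sub_mul, Matrix.smul_mul, Matrix.mul_smul, smul_smul, one_mul,
    mul_one, ← mul_assoc, h3, neg_mul]
  linear_combination (norm := module) hsc • (skew u * skew u)

lemma attDist2_rodrigues (hu : norm2 u = 1) (θ : ℝ) :
    attDist2 (rodrigues θ u) = (1 - cos θ) / 2 := by
  rw [attDist2_eq_three_sub_trace, rodrigues, trace_add, trace_add, trace_smul, trace_smul,
    trace_skew, trace_skew_mul_skew, hu]
  simp only [trace_one, Fintype.card_fin, Nat.cast_ofNat, smul_eq_mul]
  ring

lemma attDist2_rodrigues_two_mul_arcsin (hu : norm2 u = 1) {x : ℝ} (hx₁ : -1 ≤ x)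
    (hx₂ : x ≤ 1) :
    attDist2 (rodrigues (2 * arcsin x) u) = x ^ 2 := by
  rw [attDist2_rodrigues hu, cos_two_mul_eq_one_sub, sin_arcsin hx₁ hx₂]
  ring

end Rodrigues

/-- With `0 < k < 1/√2`, a unit vector `u`, and the warped
attitude `Γ(R) = R 𝓡(2 arcsin(k |R|_I²), u)`, one has
`V(Γ(R)) = 1 − √(1 − |Γ(R)|_I²) = 0` iff `R = I`. -/
theorem stmt11 (k : ℝ) (hk0 : 0 < k) (hk : k < 1 / Real.sqrt 2)
    (u : Fin 3 → ℝ) (hu : norm2 u = 1)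
    (R : Matrix (Fin 3) (Fin 3) ℝ) (hR : SO3 R) :
    1 - Real.sqrt (1 - attDist2 (R * rodrigues (2 * Real.arcsin (k * attDist2 R)) u)) = 0 ↔
      R = 1 := by
  set s := attDist2 R with hs
  set Q := rodrigues (2 * arcsin (k * s)) u
  have hQ : Qᵀ * Q = 1 := rodrigues_transpose_mul_self hu _
  have hRQ : (R * Q)ᵀ * (R * Q) = 1 := by
    rw [transpose_mul, mul_assoc, ← mul_assoc Rᵀ, hR.1, one_mul, hQ]
  rw [sub_eq_zero, eq_comm, sqrt_eq_one, sub_eq_self, attDist2_eq_zero_iff hRQ]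
  constructor
  · intro hΓ
    have hs₀ : 0 ≤ s := attDist2_nonneg hR.1
    have hs₁ : s ≤ 1 := attDist2_le_one hR
    have hk₂ : k ^ 2 < 1 / 2 := by
      have := pow_lt_pow_left₀ hk hk0.le two_ne_zero
      rwa [div_pow, one_pow, sq_sqrt zero_le_two] at this
    have hks₀ : 0 ≤ k * s := mul_nonneg hk0.le hs₀
    have hks : k * s ≤ 1 := by nlinarith
    have hRQt : R = Qᵀ := by
      rw [← mul_one R, ← mul_eq_one_comm.mp hQ, ← mul_assoc, hΓ, one_mul]
    have hss : s = (k * s) ^ 2 := calc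
      s = attDist2 Qᵀ := congrArg attDist2 hRQt
      _ = attDist2 Q := attDist2_transpose Q
      _ = (k * s) ^ 2 := attDist2_rodrigues_two_mul_arcsin hu (by linarith) hks
    have hs0 : s = 0 := by
      have hlt : k ^ 2 * s < 1 := by nlinarith
      have : s * (1 - k ^ 2 * s) = 0 := by linear_combination hss
      exact (mul_eq_zero.1 this).resolve_right (by linarith)
    exact (attDist2_eq_zero_iff hR.1).1 hs0
  · rintro rfl
    simp [Q, hs, attDist2_eq_three_sub_trace, rodrigues_zero]
end
end

section
/- Let {u₁, u₂, u₃} be an orthonormal set of vectors in ℝ³ and define u₄ := −u₁, u₅ := −u₂, u₆ := −u₃. Then for every ε ∈ ℝ³ and every q ∈ {1, …, 6}, one has max over m ∈ {1, …, 6} of |ε · (u_q − u_m)| ≥ ‖ε‖/√3. -/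
open Matrix

noncomputable section

/-! The six vectors come in antipodal pairs `±uᵢ`, and `2 ε·uᵢ = ε·(v + uᵢ) − ε·(v − uᵢ)` for any
`v`, so every coordinate `|ε·uᵢ|` of `ε` in the orthonormal basis is bounded by the maximum `M`.
Parseval then gives `‖ε‖² = ∑ᵢ (ε·uᵢ)² ≤ 3 M²`. -/

theorem abs_le_of_abs_sub_le_of_abs_add_le {x y M : ℝ} (hsub : |x - y| ≤ M) (hadd : |x + y| ≤ M) :
    |y| ≤ M := by
  rw [abs_le] at *
  constructor <;> linarith

theorem sum_sq_dotProduct_eq_of_mul_transpose_eq_one {R ι : Type*} [CommRing R] [Fintype ι]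
    [DecidableEq ι] (U : Matrix ι ι R) (hU : U * Uᵀ = 1) (x : ι → R) :
    ∑ i, (x ⬝ᵥ U i) ^ 2 = x ⬝ᵥ x := by
  calc ∑ i, (x ⬝ᵥ U i) ^ 2 = (U *ᵥ x) ⬝ᵥ (U *ᵥ x) := by
        refine Finset.sum_congr rfl fun i _ => ?_
        rw [sq, mulVec, dotProduct_comm]
    _ = x ⬝ᵥ x := by
        rw [dotProduct_mulVec, ← vecMul_transpose, vecMul_vecMul, mul_eq_one_comm.mp hU, vecMul_one]

theorem sqrt_dotProduct_self_div_le {n : ℕ} [NeZero n] (U : Matrix (Fin n) (Fin n) ℝ)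
    (hU : U * Uᵀ = 1) (ε v : Fin n → ℝ) {M : ℝ} (hsub : ∀ i, |ε ⬝ᵥ (v - U i)| ≤ M)
    (hadd : ∀ i, |ε ⬝ᵥ (v + U i)| ≤ M) :
    √(ε ⬝ᵥ ε) / √n ≤ M := by
  have hcoord : ∀ i, |ε ⬝ᵥ U i| ≤ M := fun i =>
    abs_le_of_abs_sub_le_of_abs_add_le (x := ε ⬝ᵥ v)
      (by simpa only [dotProduct_sub] using hsub i) (by simpa only [dotProduct_add] using hadd i)
  have hM : 0 ≤ M := (abs_nonneg _).trans (hcoord 0)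
  have hparseval : ε ⬝ᵥ ε ≤ n * M ^ 2 := by
    calc ε ⬝ᵥ ε = ∑ i, (ε ⬝ᵥ U i) ^ 2 := (sum_sq_dotProduct_eq_of_mul_transpose_eq_one U hU ε).symm
      _ ≤ ∑ _i : Fin n, M ^ 2 :=
        Finset.sum_le_sum fun i _ => sq_le_sq' (abs_le.mp (hcoord i)).1 (abs_le.mp (hcoord i)).2
      _ = n * M ^ 2 := by simp
  rw [← Real.sqrt_div' _ n.cast_nonneg, Real.sqrt_le_iff]
  exact ⟨hM, div_le_of_le_mul₀ n.cast_nonneg (sq_nonneg M) (by linarith)⟩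

theorem of_rows_mul_transpose_eq_one (u1 u2 u3 : Fin 3 → ℝ)
    (h1 : norm2 u1 = 1) (h2 : norm2 u2 = 1) (h3 : norm2 u3 = 1)
    (h12 : dotp u1 u2 = 0) (h13 : dotp u1 u3 = 0) (h23 : dotp u2 u3 = 0) :
    Matrix.of ![u1, u2, u3] * (Matrix.of ![u1, u2, u3])ᵀ = 1 := by
  have h21 : dotp u2 u1 = 0 := (dotProduct_comm u2 u1).trans h12
  have h31 : dotp u3 u1 = 0 := (dotProduct_comm u3 u1).trans h13
  have h32 : dotp u3 u2 = 0 := (dotProduct_comm u3 u2).trans h23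
  ext i j
  rw [mul_apply']
  fin_cases i <;> fin_cases j <;> assumption

/-- For an orthonormal set `{u₁, u₂, u₃}` in ℝ³ extended by
`u₄ = −u₁`, `u₅ = −u₂`, `u₆ = −u₃`, for every `ε ∈ ℝ³` and index `q`,
the maximum over `m` of `|ε · (u_q − u_m)|` is at least `‖ε‖/√3`. -/
theorem stmt13 (u1 u2 u3 : Fin 3 → ℝ)
    (h1 : norm2 u1 = 1) (h2 : norm2 u2 = 1) (h3 : norm2 u3 = 1)
    (h12 : dotp u1 u2 = 0) (h13 : dotp u1 u3 = 0) (h23 : dotp u2 u3 = 0)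
    (ε : Fin 3 → ℝ) (q : Fin 6) :
    Real.sqrt (norm2 ε) / Real.sqrt 3 ≤
      Finset.univ.sup' Finset.univ_nonempty (fun m : Fin 6 =>
        |dotp ε (![u1, u2, u3, -u1, -u2, -u3] q - ![u1, u2, u3, -u1, -u2, -u3] m)|) := by
  set u := ![u1, u2, u3, -u1, -u2, -u3]
  set M := Finset.univ.sup' Finset.univ_nonempty fun m : Fin 6 => |dotp ε (u q - u m)|
  have hle (m : Fin 6) : |dotp ε (u q - u m)| ≤ M :=
    Finset.le_sup' (fun m => |dotp ε (u q - u m)|) (Finset.mem_univ m)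
  have hsub (i : Fin 3) : |ε ⬝ᵥ (u q - Matrix.of ![u1, u2, u3] i)| ≤ M := by
    have hpos := hle (Fin.castAdd 3 i)
    fin_cases i <;> exact hpos
  have hadd (i : Fin 3) : |ε ⬝ᵥ (u q + Matrix.of ![u1, u2, u3] i)| ≤ M := by
    have hneg := hle (Fin.natAdd 3 i)
    rw [← sub_neg_eq_add]
    fin_cases i <;> exact hneg
  exact_mod_cast sqrt_dotProduct_self_div_le _
    (of_rows_mul_transpose_eq_one u1 u2 u3 h1 h2 h3 h12 h13 h23) ε (u q) hsub hadd
end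
end

section
/- Let (η, ε) ∈ ℝ × ℝ³ with η² + ‖ε‖² = 1, let 0 < k < 1/√2, and let u ∈ ℝ³ be a unit vector. If η √(1 − k²‖ε‖⁴) = k ‖ε‖² (ε · u), then ‖ε‖² ≥ (−1 + √(1 + 4k²))/(2k²). -/
/-!
Write `s = ‖ε‖²`. Squaring the singularity condition and using `η² = 1 - s` together with
Cauchy–Schwarz `(ε · u)² ≤ s` gives `(1 - s)(1 - k²s²) ≤ k²s³`, i.e. `k²s² + s ≥ 1`
(trivially so when `k²s² > 1`, where the square root vanishes). Hence `s` lies beyond the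
positive root `(-1 + √(1 + 4k²))/(2k²)` of `k²s² + s - 1`.
-/

open Matrix

noncomputable section

lemma quadratic_root_le {a s : ℝ} (ha : 0 < a) (hs : 0 ≤ s) (h : 1 ≤ a * s ^ 2 + s) :
    (-1 + Real.sqrt (1 + 4 * a)) / (2 * a) ≤ s := by
  have hsqrt : Real.sqrt (1 + 4 * a) ≤ 1 + 2 * a * s := by
    rw [Real.sqrt_le_left (by positivity)]
    nlinarith
  rw [div_le_iff₀ (by positivity)]
  linarith

lemma one_le_sq_mul_sq_add_of_mul_sqrt_eq {η k s c : ℝ} (hη : η ^ 2 = 1 - s) (hc : c ^ 2 ≤ s)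
    (h : η * Real.sqrt (1 - k ^ 2 * s ^ 2) = k * s * c) : 1 ≤ k ^ 2 * s ^ 2 + s := by
  by_cases hks : 1 ≤ k ^ 2 * s ^ 2
  · nlinarith [sq_nonneg η]
  have hsq : (1 - s) * (1 - k ^ 2 * s ^ 2) = k ^ 2 * s ^ 2 * c ^ 2 := by
    rw [← hη, ← Real.sq_sqrt (by linarith : 0 ≤ 1 - k ^ 2 * s ^ 2), ← mul_pow, h]
    ring
  nlinarith [mul_le_mul_of_nonneg_left hc (by positivity : 0 ≤ k ^ 2 * s ^ 2)]

theorem stmt16_general (η k : ℝ) (ε u : Fin 3 → ℝ) (hq : η ^ 2 + norm2 ε = 1)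
    (hk0 : 0 < k) (hu : norm2 u = 1)
    (hsing : η * Real.sqrt (1 - k ^ 2 * norm2 ε ^ 2) = k * norm2 ε * dotp ε u) :
    (-1 + Real.sqrt (1 + 4 * k ^ 2)) / (2 * k ^ 2) ≤ norm2 ε := by
  have hcs : dotp ε u ^ 2 ≤ norm2 ε := by
    simpa [hu] using dotp_sq_le_norm2_mul_norm2 ε u
  exact quadratic_root_le (by positivity) (norm2_nonneg ε)
    (one_le_sq_mul_sq_add_of_mul_sqrt_eq (by linarith) hcs hsing)

/-- For a unit quaternion `(η, ε)`, `0 < k < 1/√2` and a unit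
vector `u`, if `η √(1 − k²‖ε‖⁴) = k ‖ε‖² (ε · u)` then
`‖ε‖² ≥ (−1 + √(1 + 4k²))/(2k²)`. -/
theorem stmt16 (η k : ℝ) (ε u : Fin 3 → ℝ) (hq : η ^ 2 + norm2 ε = 1)
    (hk0 : 0 < k) (hk : k < 1 / Real.sqrt 2) (hu : norm2 u = 1)
    (hsing : η * Real.sqrt (1 - k ^ 2 * norm2 ε ^ 2) = k * norm2 ε * dotp ε u) :
    (-1 + Real.sqrt (1 + 4 * k ^ 2)) / (2 * k ^ 2) ≤ norm2 ε :=
  stmt16_general η k ε u hq hk0 hu hsing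
end
end
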